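/- arXiv:1611.00350 — 5 statements merged into one kernel-verified Lean document; each statement's English description precedes it below -/
import Mathlib

section
/- Let f : Finset V → ℝ≥0 be monotone and submodular with f(∅) = 0. Let D be a nonempty finite set of elements, K ≥ 1, and suppose G₀ = ∅ and G_i = G_{i-1} ∪ {g_i} are constructed so that max_{d∈D} f(G_{i-1} ∪ {d}) - f(G_{i-1}) ≤ f(G_{i-1} ∪ {g_i}) - f(G_{i-1}) + ε_i for each i = 1,...,K. Then (1 - 1/e)·max_{S ⊆ D, |S| ≤ K} f(S) - f(G_K) ≤ ∑_{i=1}^K ε_i. -/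
theorem approximate_greedy_guarantee {V : Type*} [Fintype V] [DecidableEq V]
    (f : Finset V → ℝ)
    (hnonneg : ∀ S, 0 ≤ f S)
    (hmono : ∀ S T : Finset V, S ⊆ T → f S ≤ f T)
    (hsub : ∀ S T : Finset V, f (S ∪ T) + f (S ∩ T) ≤ f S + f T)
    (hempty : f ∅ = 0)
    (D : Finset V) (hD : D.Nonempty)
    (K : ℕ) (hK : 1 ≤ K)
    (G : ℕ → Finset V) (g : ℕ → V) (ε : ℕ → ℝ)
    (hε : ∀ i, 0 ≤ ε i)
    (hG0 : G 0 = ∅)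
    (hgD : ∀ i, 1 ≤ i → i ≤ K → g i ∈ D)
    (hGstep : ∀ i, 1 ≤ i → i ≤ K → G i = insert (g i) (G (i - 1)))
    (hgreedy : ∀ i, 1 ≤ i → i ≤ K → ∀ d ∈ D,
      f (insert d (G (i - 1))) - f (G (i - 1)) ≤ f (G i) - f (G (i - 1)) + ε i) :
    ∀ S ⊆ D, S.card ≤ K →
      (1 - 1 / Real.exp 1) * f S - f (G K) ≤ ∑ i ∈ Finset.Icc 1 K, ε i := by
  intro S hSD hcard
  have hKpos : (0:ℝ) < (K:ℝ) := by exact_mod_cast hK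
  have hKne : (K:ℝ) ≠ 0 := ne_of_gt hKpos
  have hc : 0 ≤ 1 - 1/(K:ℝ) := by
    have : 1/(K:ℝ) ≤ 1 := by
      rw [div_le_one hKpos]; exact_mod_cast hK
    linarith
  have hc1 : 1 - 1/(K:ℝ) ≤ 1 := by
    have : 0 < 1/(K:ℝ) := by positivity
    linarith
  -- key submodular bound
  have key : ∀ T : Finset V, f S ≤ f T + ∑ d ∈ S, (f (insert d T) - f T) := by
    intro T
    have h1 : ∀ (A : Finset V), f (A ∪ T) ≤ f T + ∑ d ∈ A, (f (insert d T) - f T) := by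
      intro A
      induction A using Finset.induction_on with
      | empty => simp
      | @insert a A' ha ih =>
        have hsub' := hsub (A' ∪ T) (insert a T)
        have hunion : (A' ∪ T) ∪ insert a T = insert a A' ∪ T := by
          ext x
          simp only [Finset.mem_union, Finset.mem_insert]
          tauto
        have hT : T ⊆ (A' ∪ T) ∩ insert a T := by
          intro x hx
          simp only [Finset.mem_inter, Finset.mem_union, Finset.mem_insert]
          tauto
        have hmT := hmono _ _ hT
        rw [hunion] at hsub'
        rw [Finset.sum_insert ha]
        linarith
    calc f S ≤ f (S ∪ T) := hmono _ _ Finset.subset_union_left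
      _ ≤ _ := h1 S
  -- per-step bound
  have step : ∀ i, 1 ≤ i → i ≤ K →
      f S - f (G (i-1)) ≤ (K:ℝ) * (f (G i) - f (G (i-1)) + ε i) := by
    intro i hi1 hiK
    have hgain : 0 ≤ f (G i) - f (G (i-1)) + ε i := by
      have hsubset : G (i-1) ⊆ G i := by
        rw [hGstep i hi1 hiK]; exact Finset.subset_insert _ _
      have := hmono _ _ hsubset
      have := hε i
      linarith
    have hsum : ∑ d ∈ S, (f (insert d (G (i-1))) - f (G (i-1)))
        ≤ (S.card : ℝ) * (f (G i) - f (G (i-1)) + ε i) := by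
      calc ∑ d ∈ S, (f (insert d (G (i-1))) - f (G (i-1)))
          ≤ ∑ _d ∈ S, (f (G i) - f (G (i-1)) + ε i) :=
            Finset.sum_le_sum (fun d hd => hgreedy i hi1 hiK d (hSD hd))
        _ = (S.card : ℝ) * (f (G i) - f (G (i-1)) + ε i) := by
            rw [Finset.sum_const, nsmul_eq_mul]
    have hcardle : (S.card : ℝ) ≤ (K:ℝ) := by exact_mod_cast hcard
    have := key (G (i-1))
    nlinarith [mul_le_mul_of_nonneg_right hcardle hgain]
  -- main induction
  have main : ∀ j, j ≤ K →
      f S - f (G j) ≤ (1 - 1/(K:ℝ))^j * f S + ∑ i ∈ Finset.Icc 1 j, ε i := by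
    intro j
    induction j with
    | zero => intro _; simp [hG0, hempty]
    | succ j ih =>
      intro hjK
      have hj : j ≤ K := Nat.le_of_succ_le hjK
      have ihj := ih hj
      have hstep := step (j+1) (Nat.succ_le_succ (Nat.zero_le j)) hjK
      simp only [Nat.add_sub_cancel] at hstep
      have hKK : (K:ℝ) * (1/(K:ℝ)) = 1 := by field_simp
      have hrec : f S - f (G (j+1)) ≤ (1 - 1/(K:ℝ)) * (f S - f (G j)) + ε (j+1) := by
        have h2 : (K:ℝ) * (f S - f (G (j+1)))
            ≤ (K:ℝ) * ((1 - 1/(K:ℝ)) * (f S - f (G j)) + ε (j+1)) := by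
          have hexpand : (K:ℝ) * ((1 - 1/(K:ℝ)) * (f S - f (G j)) + ε (j+1))
              = (K:ℝ)*(f S - f (G j)) - (f S - f (G j)) + (K:ℝ)*ε (j+1) := by
            field_simp
          nlinarith [hstep, hexpand]
        exact le_of_mul_le_mul_left h2 hKpos
      have hεsum : 0 ≤ ∑ i ∈ Finset.Icc 1 j, ε i :=
        Finset.sum_nonneg (fun i _ => hε i)
      have hsumsucc : ∑ i ∈ Finset.Icc 1 (j+1), ε i
          = (∑ i ∈ Finset.Icc 1 j, ε i) + ε (j+1) := by
        rw [Finset.sum_Icc_succ_top (Nat.succ_le_succ (Nat.zero_le j))]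
      have hmul : (1 - 1/(K:ℝ)) * (f S - f (G j))
          ≤ (1 - 1/(K:ℝ)) * ((1 - 1/(K:ℝ))^j * f S + ∑ i ∈ Finset.Icc 1 j, ε i) :=
        mul_le_mul_of_nonneg_left ihj hc
      have hpow : (1 - 1/(K:ℝ)) * ((1 - 1/(K:ℝ))^j * f S) = (1 - 1/(K:ℝ))^(j+1) * f S := by
        rw [pow_succ]; ring
      have hshrink : (1 - 1/(K:ℝ)) * (∑ i ∈ Finset.Icc 1 j, ε i)
          ≤ ∑ i ∈ Finset.Icc 1 j, ε i := by
        nlinarith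
      rw [hsumsucc]
      nlinarith [hrec, hmul, hpow, hshrink]
  -- (1-1/K)^K ≤ 1/e
  have hexp : (1 - 1/(K:ℝ))^K ≤ 1 / Real.exp 1 := by
    have h1 : 1 - 1/(K:ℝ) ≤ Real.exp (-(1/(K:ℝ))) := by
      have := Real.add_one_le_exp (-(1/(K:ℝ)))
      linarith
    have h2 : (1 - 1/(K:ℝ))^K ≤ (Real.exp (-(1/(K:ℝ))))^K :=
      pow_le_pow_left₀ hc h1 K
    rw [← Real.exp_nat_mul] at h2
    have h3 : (K:ℝ) * (-(1/(K:ℝ))) = -1 := by field_simp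
    rw [h3, Real.exp_neg] at h2
    simpa [one_div] using h2
  have hfS : 0 ≤ f S := hnonneg S
  have hmain := main K le_rfl
  have hfinal : (1 - 1/(K:ℝ))^K * f S ≤ (1 / Real.exp 1) * f S :=
    mul_le_mul_of_nonneg_right hexp hfS
  linarith
end

section
/- Under an approximate-greedy construction for a monotone submodular function f with f(∅)=0, defining Δ_i = max_{|S|≤K, S⊆D} f(S) - f(G_{i-1}) and δ_i = f(G_i) - f(G_{i-1}), if Δ_i ≤ K(δ_i + ε_i) for all i, then Δ_{K+1} ≤ Δ₁(1 - 1/K)^K + ∑_{i=1}^K ε_i ≤ Δ₁/e + ∑_{i=1}^K ε_i. -/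
theorem greedy_recursion_bound (K : ℕ) (hK : 1 ≤ K) (Δ δ ε : ℕ → ℝ)
    (hε : ∀ i, 0 ≤ ε i) (hΔ1 : 0 ≤ Δ 1)
    (hrec : ∀ i, Δ (i + 1) = Δ i - δ i)
    (hineq : ∀ i, 1 ≤ i → i ≤ K → Δ i ≤ (K : ℝ) * (δ i + ε i)) :
    Δ (K + 1) ≤ Δ 1 * (1 - 1 / (K : ℝ)) ^ K + ∑ i ∈ Finset.Icc 1 K, ε i ∧
    Δ 1 * (1 - 1 / (K : ℝ)) ^ K + ∑ i ∈ Finset.Icc 1 K, ε i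
      ≤ Δ 1 / Real.exp 1 + ∑ i ∈ Finset.Icc 1 K, ε i := by
  have hKpos : (0 : ℝ) < K := by exact_mod_cast Nat.lt_of_lt_of_le Nat.zero_lt_one hK
  have hfac : (0 : ℝ) ≤ 1 - 1 / (K : ℝ) := by
    have : 1 / (K : ℝ) ≤ 1 := by
      rw [div_le_one hKpos]; exact_mod_cast hK
    linarith
  have key : ∀ i, i ≤ K → Δ (i + 1) ≤ Δ 1 * (1 - 1 / (K : ℝ)) ^ i + ∑ j ∈ Finset.Icc 1 i, ε j := by
    intro i
    induction i with
    | zero => intro _; simp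
    | succ n ih =>
      intro hn
      have hn' : n ≤ K := Nat.le_of_succ_le hn
      have ihn := ih hn'
      have h1 : Δ (n + 1) ≤ (K : ℝ) * (δ (n + 1) + ε (n + 1)) :=
        hineq (n + 1) (Nat.succ_le_succ (Nat.zero_le n)) hn
      have hstep : Δ (n + 2) ≤ Δ (n + 1) * (1 - 1 / (K : ℝ)) + ε (n + 1) := by
        rw [hrec (n + 1)]
        have : Δ (n + 1) / K - ε (n + 1) ≤ δ (n + 1) := by
          rw [div_sub' (ne_of_gt hKpos), div_le_iff₀ hKpos]
          nlinarith
        have hK' : Δ (n+1) * (1 - 1/(K:ℝ)) = Δ (n+1) - Δ (n+1)/K := by ring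
        rw [hK']; linarith
      have hmul : Δ (n + 1) * (1 - 1 / (K : ℝ)) ≤
          (Δ 1 * (1 - 1 / (K : ℝ)) ^ n + ∑ j ∈ Finset.Icc 1 n, ε j) * (1 - 1 / (K : ℝ)) :=
        mul_le_mul_of_nonneg_right ihn hfac
      have hsum : ∑ j ∈ Finset.Icc 1 (n + 1), ε j = (∑ j ∈ Finset.Icc 1 n, ε j) + ε (n + 1) := by
        rw [Finset.sum_Icc_succ_top (Nat.succ_le_succ (Nat.zero_le n))]
      have hεsum : (0 : ℝ) ≤ ∑ j ∈ Finset.Icc 1 n, ε j :=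
        Finset.sum_nonneg fun j _ => hε j
      rw [hsum]
      have hfac1 : 1 - 1 / (K : ℝ) ≤ 1 := by
        have : 0 < 1 / (K : ℝ) := by positivity
        linarith
      calc Δ (n + 2) ≤ Δ (n + 1) * (1 - 1 / (K : ℝ)) + ε (n + 1) := hstep
        _ ≤ (Δ 1 * (1 - 1 / (K : ℝ)) ^ n + ∑ j ∈ Finset.Icc 1 n, ε j) * (1 - 1 / (K : ℝ)) + ε (n + 1) := by linarith
        _ ≤ Δ 1 * (1 - 1 / (K : ℝ)) ^ (n + 1) + ((∑ j ∈ Finset.Icc 1 n, ε j) + ε (n + 1)) := by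
            have hS : (∑ j ∈ Finset.Icc 1 n, ε j) * (1 - 1 / (K : ℝ)) ≤ ∑ j ∈ Finset.Icc 1 n, ε j := by
              nlinarith
            have h2 : (Δ 1 * (1 - 1 / (K : ℝ)) ^ n + ∑ j ∈ Finset.Icc 1 n, ε j) * (1 - 1 / (K : ℝ))
                = Δ 1 * (1 - 1 / (K : ℝ)) ^ (n + 1) + (∑ j ∈ Finset.Icc 1 n, ε j) * (1 - 1 / (K : ℝ)) := by
              ring
            linarith
  constructor
  · exact key K le_rfl
  · have hexp : (1 - 1 / (K : ℝ)) ^ K ≤ Real.exp (-1) := by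
      have h1 : 1 - 1 / (K : ℝ) ≤ Real.exp (-(1 / (K : ℝ))) := by
        have := Real.add_one_le_exp (-(1 / (K : ℝ)))
        linarith
      calc (1 - 1 / (K : ℝ)) ^ K ≤ (Real.exp (-(1 / (K : ℝ)))) ^ K :=
            pow_le_pow_left₀ hfac h1 K
        _ = Real.exp (-(1 / (K : ℝ)) * K) := by rw [← Real.exp_nat_mul]; ring_nf
        _ = Real.exp (-1) := by
            congr 1
            field_simp
    have : Δ 1 * (1 - 1 / (K : ℝ)) ^ K ≤ Δ 1 * Real.exp (-1) :=
      mul_le_mul_of_nonneg_left hexp hΔ1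
    rw [Real.exp_neg] at this
    have : Δ 1 * (1 - 1 / (K : ℝ)) ^ K ≤ Δ 1 / Real.exp 1 := by
      rw [div_eq_mul_inv]; exact this
    linarith
end

section
/- For c ∈ (0,1), δ ∈ (0,1), and integers n > c: (1 - (c/n)(1-δ))·log((1 - (c/n)(1-δ))/(1 - c/n)) + (c/n)(1-δ)·log(1-δ) ≤ c·δ²/(n - c). -/
/-!
The left-hand side is the Kullback–Leibler divergence between the Bernoulli laws with parameters
`(c / n) (1 - δ)` and `c / n`, and the right-hand side is their χ²-divergence. Applying
`log t ≤ t - 1` termwise bounds the former by the latter.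
-/

open Real

lemma mul_log_div_le {t s : ℝ} (ht : 0 < t) (hs : 0 < s) :
    t * log (t / s) ≤ t ^ 2 / s - t := by
  calc t * log (t / s) ≤ t * (t / s - 1) :=
        mul_le_mul_of_nonneg_left (log_le_sub_one_of_pos (div_pos ht hs)) ht.le
    _ = t ^ 2 / s - t := by ring

lemma bernoulli_kl_le_chiSq {x y : ℝ} (hx0 : 0 < x) (hx1 : x < 1) (hy0 : 0 < y) (hy1 : y < 1) :
    x * log (x / y) + (1 - x) * log ((1 - x) / (1 - y)) ≤ (x - y) ^ 2 / (y * (1 - y)) := by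
  have hx : x * log (x / y) ≤ x ^ 2 / y - x := mul_log_div_le hx0 hy0
  have hx' : (1 - x) * log ((1 - x) / (1 - y)) ≤ (1 - x) ^ 2 / (1 - y) - (1 - x) :=
    mul_log_div_le (by linarith) (by linarith)
  have hchi : x ^ 2 / y - x + ((1 - x) ^ 2 / (1 - y) - (1 - x)) = (x - y) ^ 2 / (y * (1 - y)) := by
    field_simp [(by linarith : 1 - y ≠ 0)]
    ring
  linarith

theorem clique_kl_bound_general (c δ : ℝ) (n : ℕ)
    (hc0 : 0 < c)
    (hδ0 : 0 < δ) (hδ1 : δ < 1) (hn : c < (n : ℝ)) :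
    (1 - c / n * (1 - δ)) * Real.log ((1 - c / n * (1 - δ)) / (1 - c / n))
      + c / n * (1 - δ) * Real.log (1 - δ)
      ≤ c * δ ^ 2 / ((n : ℝ) - c) := by
  have hn0 : (0 : ℝ) < n := hc0.trans hn
  set p := c / n with hp
  have hp0 : 0 < p := div_pos hc0 hn0
  have hp1 : p < 1 := (div_lt_one hn0).2 hn
  have hx0 : 0 < p * (1 - δ) := mul_pos hp0 (by linarith)
  have hx1 : p * (1 - δ) < 1 := by nlinarith
  have hratio : p * (1 - δ) / p = 1 - δ := mul_div_cancel_left₀ _ hp0.ne'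
  have hchi : (p * (1 - δ) - p) ^ 2 / (p * (1 - p)) = c * δ ^ 2 / ((n : ℝ) - c) := by
    rw [hp]
    field_simp [(by linarith : (n : ℝ) - c ≠ 0)]
    ring
  have hkl := bernoulli_kl_le_chiSq hx0 hx1 hp0 hp1
  rw [hratio, hchi] at hkl
  linarith

theorem clique_kl_bound (c δ : ℝ) (n : ℕ)
    (hc0 : 0 < c) (hc1 : c < 1)
    (hδ0 : 0 < δ) (hδ1 : δ < 1) (hn : c < (n : ℝ)) :
    (1 - c / n * (1 - δ)) * Real.log ((1 - c / n * (1 - δ)) / (1 - c / n))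
      + c / n * (1 - δ) * Real.log (1 - δ)
      ≤ c * δ ^ 2 / ((n : ℝ) - c) :=
  clique_kl_bound_general c δ n hc0 hδ0 hδ1 hn
end

section
/- The function f(x,y) = x·y·√((1-x-y)/(x(1-y))) on the domain {(x,y) : x > 0, 0 < y < 1, x + y < 1} attains its maximum value 1/(3√3) at (x,y) = (1/6, 2/3). -/
/-!
Squaring removes the root: `f² = y² · x(1 - y - x)/(1 - y)`. By AM-GM in `x`,
`x(1 - y - x) ≤ (1 - y)²/4`, so `f² ≤ y²(1 - y)/4`, and the cubic `s(1 - s)²` with `s = 1 - y`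
is at most `4/27`, attained at `s = 1/3`. Both bounds are tight at `(1/6, 2/3)`.
-/

open Real

/-- `(1 - s)² s - 4/27 = (s - 4/3)(s - 1/3)²`. -/
lemma one_sub_sq_mul_le {s : ℝ} (hs : s ≤ 4 / 3) : (1 - s) ^ 2 * s ≤ 4 / 27 := by
  nlinarith [mul_nonneg (sub_nonneg.2 hs) (sq_nonneg (s - 1 / 3))]

lemma sq_mul_mul_div_le {x y : ℝ} (hx : x ≠ 0) (hy₀ : 0 ≤ y) (hy₁ : y < 1) :
    (x * y) ^ 2 * ((1 - x - y) / (x * (1 - y))) ≤ 1 / 27 := by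
  have hs : 0 < 1 - y := sub_pos.2 hy₁
  have amgm : 4 * x * (1 - y - x) ≤ (1 - y) ^ 2 := by
    simpa using four_mul_le_sq_add x (1 - y - x)
  calc (x * y) ^ 2 * ((1 - x - y) / (x * (1 - y)))
      = y ^ 2 * (4 * x * (1 - y - x)) / (4 * (1 - y)) := by field_simp; ring
    _ ≤ y ^ 2 * (1 - y) ^ 2 / (4 * (1 - y)) := by gcongr
    _ = (1 - (1 - y)) ^ 2 * (1 - y) / 4 := by field_simp; ring
    _ ≤ (4 / 27) / 4 := by gcongr; exact one_sub_sq_mul_le (by linarith)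
    _ = 1 / 27 := by norm_num

lemma one_div_three_mul_sqrt_three_sq : (1 / (3 * √3)) ^ 2 = 1 / 27 := by
  rw [div_pow, mul_pow, sq_sqrt (by norm_num)]
  norm_num

theorem max_of_f :
    (∀ x y : ℝ, 0 < x → 0 < y → y < 1 → x + y < 1 →
      x * y * Real.sqrt ((1 - x - y) / (x * (1 - y))) ≤ 1 / (3 * Real.sqrt 3)) ∧
    (1 / 6 : ℝ) * (2 / 3) * Real.sqrt ((1 - 1 / 6 - 2 / 3) / ((1 / 6) * (1 - 2 / 3)))
      = 1 / (3 * Real.sqrt 3) := by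
  constructor
  · intro x y hx hy hy₁ hxy
    have hq : 0 ≤ (1 - x - y) / (x * (1 - y)) := div_nonneg (by linarith) (by nlinarith)
    refine le_of_sq_le_sq ?_ (by positivity)
    rw [one_div_three_mul_sqrt_three_sq, mul_pow _ (√_), sq_sqrt hq]
    exact sq_mul_mul_div_le hx.ne' hy.le hy₁
  · rw [show ((1 : ℝ) - 1 / 6 - 2 / 3) / (1 / 6 * (1 - 2 / 3)) = 3 by norm_num]
    have := mul_self_sqrt (show (0 : ℝ) ≤ 3 by norm_num)
    field_simp
    linarith
end

section
/- With the setup of the symmetric loss estimate (p ∈ Δⁿ strictly positive, ℓ_{ij} ∈ [0,1] symmetric in effect), the second moment satisfies E_{S∼p} E_{I∼p}[ℓ̂_I²] ≤ (n+1)/2, where ℓ̂_i = (1/n)∑_{j≠i} ℓ_{ij} Z_{ij}/(p_i+p_j) and Z_{ij} is the indicator that S ∈ {i,j}. -/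
open Finset

lemma key_swap (n : ℕ) (f : Fin n → Fin n → ℝ) :
    ∑ s, ∑ j ∈ Finset.univ.erase s, f s j = ∑ s, ∑ j ∈ Finset.univ.erase s, f j s := by
  have h : ∀ g : Fin n → Fin n → ℝ,
      (∑ s, ∑ j ∈ Finset.univ.erase s, g s j) = ∑ s, ∑ j, if j = s then 0 else g s j := by
    intro g
    refine Finset.sum_congr rfl fun s _ => ?_
    rw [show Finset.univ.erase s = Finset.univ.filter (· ≠ s) by
      ext x; simp [Finset.mem_erase, and_comm]]
    rw [Finset.sum_filter]
    refine Finset.sum_congr rfl fun j _ => ?_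
    by_cases hj : j = s <;> simp [hj]
  rw [h, h]
  rw [Finset.sum_comm]
  refine Finset.sum_congr rfl fun s _ => Finset.sum_congr rfl fun j _ => ?_
  by_cases hj : j = s
  · subst hj; simp
  · by_cases hj' : s = j
    · exact absurd hj'.symm hj
    · simp [hj, hj']

lemma key_half (n : ℕ) (hn : 1 ≤ n) (p : Fin n → ℝ) (hp : ∀ i, 0 < p i) :
    ∑ s, ∑ j ∈ Finset.univ.erase s, p s / (p s + p j) = ((n:ℝ)^2 - n) / 2 := by
  have hn1 : (1:ℝ) ≤ n := by exact_mod_cast hn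
  have h1 : (∑ s, ∑ j ∈ Finset.univ.erase s, p s / (p s + p j))
      + (∑ s, ∑ j ∈ Finset.univ.erase s, p j / (p s + p j)) = (n:ℝ)^2 - n := by
    rw [← Finset.sum_add_distrib]
    have hs : ∀ s : Fin n, (∑ j ∈ Finset.univ.erase s, p s / (p s + p j))
        + (∑ j ∈ Finset.univ.erase s, p j / (p s + p j)) = (n:ℝ) - 1 := by
      intro s
      rw [← Finset.sum_add_distrib]
      have hone : ∀ j ∈ Finset.univ.erase s, p s / (p s + p j) + p j / (p s + p j) = 1 := by
        intro j _
        have hpos : 0 < p s + p j := by have := hp s; have := hp j; linarith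
        field_simp
      rw [Finset.sum_congr rfl hone, Finset.sum_const, Finset.card_erase_of_mem (Finset.mem_univ s),
        Finset.card_univ, Fintype.card_fin, nsmul_eq_mul]
      push_cast [Nat.cast_sub hn]
      ring
    rw [Finset.sum_congr rfl fun s _ => hs s, Finset.sum_const, Finset.card_univ,
      Fintype.card_fin, nsmul_eq_mul]
    ring
  have h2 := key_swap n (fun s j => p s / (p s + p j))
  have h3 : ∑ s, ∑ j ∈ Finset.univ.erase s, p j / (p s + p j)
      = ∑ s, ∑ j ∈ Finset.univ.erase s, p s / (p s + p j) := by
    rw [h2]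
    exact Finset.sum_congr rfl fun s _ => Finset.sum_congr rfl fun j _ => by rw [add_comm]
  rw [h3] at h1
  linarith

theorem symmetric_loss_second_moment (n : ℕ) (hn : 2 ≤ n)
    (p : Fin n → ℝ) (hp : ∀ i, 0 < p i) (hsum : ∑ i, p i = 1)
    (ℓ : Fin n → Fin n → ℝ)
    (hℓ : ∀ i j, i ≠ j → 0 ≤ ℓ i j ∧ ℓ i j ≤ 1)
    (hsymm : ∀ i j, ℓ i j = ℓ j i) :
    ∑ s, p s * ∑ i, p i *
        ((1 / (n : ℝ)) * ∑ j ∈ Finset.univ.erase i,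
          ℓ i j * (if s = i ∨ s = j then 1 else 0) / (p i + p j)) ^ 2
      ≤ ((n : ℝ) + 1) / 2 := by
  have hn1 : 1 ≤ n := le_trans (by norm_num) hn
  have hnR : (2:ℝ) ≤ n := by exact_mod_cast hn
  have hn0 : (0:ℝ) < n := by linarith
  set g : Fin n → ℝ := fun s => ∑ j ∈ Finset.univ.erase s, ℓ s j / (p s + p j) with hg
  -- rewrite inner sums
  have hrw : ∀ s : Fin n, (∑ i, p i *
        ((1 / (n : ℝ)) * ∑ j ∈ Finset.univ.erase i,
          ℓ i j * (if s = i ∨ s = j then 1 else 0) / (p i + p j)) ^ 2)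
      = p s * ((1 / (n : ℝ)) * g s) ^ 2
        + ∑ i ∈ Finset.univ.erase s, p i * ((1 / (n : ℝ)) * (ℓ i s / (p i + p s))) ^ 2 := by
    intro s
    rw [← Finset.add_sum_erase _ _ (Finset.mem_univ s)]
    congr 1
    · have hgs : (∑ j ∈ Finset.univ.erase s,
          ℓ s j * (if s = s ∨ s = j then 1 else 0) / (p s + p j)) = g s := by
        refine Finset.sum_congr rfl fun j _ => ?_
        rw [if_pos (Or.inl rfl), mul_one]
      rw [hgs]
    · refine Finset.sum_congr rfl fun i hi => ?_
      have his : i ≠ s := (Finset.mem_erase.mp hi).1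
      have hin : (∑ j ∈ Finset.univ.erase i,
          ℓ i j * (if s = i ∨ s = j then 1 else 0) / (p i + p j)) = ℓ i s / (p i + p s) := by
        rw [Finset.sum_eq_single_of_mem s (Finset.mem_erase.mpr ⟨his.symm, Finset.mem_univ s⟩)]
        · rw [if_pos (Or.inr rfl), mul_one]
        · intro j hj hjs
          have hns : ¬ (s = i ∨ s = j) := by
            rintro (h | h)
            · exact his h.symm
            · exact hjs h.symm
          rw [if_neg hns, mul_zero, zero_div]
      rw [hin]
  simp only [hrw, mul_add]
  rw [Finset.sum_add_distrib]
  -- bound A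
  have hgnn : ∀ s, 0 ≤ g s := by
    intro s
    refine Finset.sum_nonneg fun j hj => ?_
    have hj' : j ≠ s := (Finset.mem_erase.mp hj).1
    have := hp s; have := hp j
    exact div_nonneg (hℓ s j hj'.symm).1 (by linarith)
  have hpg_le : ∀ s, p s * g s ≤ (n:ℝ) - 1 := by
    intro s
    have : p s * g s = ∑ j ∈ Finset.univ.erase s, ℓ s j * (p s / (p s + p j)) := by
      rw [hg, Finset.mul_sum]
      exact Finset.sum_congr rfl fun j _ => by ring
    rw [this]
    calc ∑ j ∈ Finset.univ.erase s, ℓ s j * (p s / (p s + p j))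
        ≤ ∑ j ∈ Finset.univ.erase s, 1 := by
          refine Finset.sum_le_sum fun j hj => ?_
          have hj' : j ≠ s := (Finset.mem_erase.mp hj).1
          have hps := hp s; have hpj := hp j
          have hd : p s / (p s + p j) ≤ 1 := by
            rw [div_le_one (by linarith)]; linarith
          have hdn : 0 ≤ p s / (p s + p j) := by positivity
          calc ℓ s j * (p s / (p s + p j)) ≤ 1 * (p s / (p s + p j)) :=
                mul_le_mul_of_nonneg_right (hℓ s j hj'.symm).2 hdn
            _ ≤ 1 := by rw [one_mul]; exact hd
      _ = (n:ℝ) - 1 := by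
          rw [Finset.sum_const, Finset.card_erase_of_mem (Finset.mem_univ s),
            Finset.card_univ, Fintype.card_fin, nsmul_eq_mul, mul_one]
          push_cast [Nat.cast_sub hn1]
          ring
  have hsum_pg : ∑ s, p s * g s ≤ ((n:ℝ)^2 - n) / 2 := by
    rw [← key_half n hn1 p hp]
    refine Finset.sum_le_sum fun s _ => ?_
    have : p s * g s = ∑ j ∈ Finset.univ.erase s, ℓ s j * (p s / (p s + p j)) := by
      rw [hg, Finset.mul_sum]
      exact Finset.sum_congr rfl fun j _ => by ring
    rw [this]
    refine Finset.sum_le_sum fun j hj => ?_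
    have hj' : j ≠ s := (Finset.mem_erase.mp hj).1
    have hps := hp s; have hpj := hp j
    have hdn : 0 ≤ p s / (p s + p j) := by positivity
    calc ℓ s j * (p s / (p s + p j)) ≤ 1 * (p s / (p s + p j)) :=
          mul_le_mul_of_nonneg_right (hℓ s j hj'.symm).2 hdn
      _ = p s / (p s + p j) := one_mul _
  have hA : ∑ s, p s * (p s * ((1 / (n : ℝ)) * g s) ^ 2) ≤ ((n:ℝ) - 1) / 2 := by
    have step : ∀ s, p s * (p s * ((1 / (n : ℝ)) * g s) ^ 2)
        ≤ (((n:ℝ) - 1) / (n:ℝ)^2) * (p s * g s) := by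
      intro s
      have hx : 0 ≤ p s * g s := mul_nonneg (hp s).le (hgnn s)
      have heq : p s * (p s * ((1 / (n : ℝ)) * g s) ^ 2) = (p s * g s)^2 / (n:ℝ)^2 := by
        field_simp
      have heq2 : (((n:ℝ) - 1) / (n:ℝ)^2) * (p s * g s)
          = (((n:ℝ) - 1) * (p s * g s)) / (n:ℝ)^2 := by ring
      rw [heq, heq2]
      gcongr ?_ / _
      nlinarith [hpg_le s, hx]
    calc ∑ s, p s * (p s * ((1 / (n : ℝ)) * g s) ^ 2)
        ≤ ∑ s, (((n:ℝ) - 1) / (n:ℝ)^2) * (p s * g s) := Finset.sum_le_sum fun s _ => step s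
      _ = (((n:ℝ) - 1) / (n:ℝ)^2) * ∑ s, p s * g s := by rw [Finset.mul_sum]
      _ ≤ (((n:ℝ) - 1) / (n:ℝ)^2) * (((n:ℝ)^2 - n) / 2) := by
          refine mul_le_mul_of_nonneg_left hsum_pg (div_nonneg (by linarith) (by positivity))
      _ = ((n:ℝ) - 1)^2 / (2 * (n:ℝ)) := by field_simp
      _ ≤ ((n:ℝ) - 1) / 2 := by
          rw [div_le_div_iff₀ (by positivity) (by norm_num)]
          nlinarith
  have hB : ∑ s, p s * ∑ i ∈ Finset.univ.erase s, p i * ((1 / (n : ℝ)) * (ℓ i s / (p i + p s))) ^ 2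
      ≤ 1 / 2 := by
    have step : ∀ s : Fin n, p s * ∑ i ∈ Finset.univ.erase s,
        p i * ((1 / (n : ℝ)) * (ℓ i s / (p i + p s))) ^ 2 ≤ ((n:ℝ) - 1) / (2 * (n:ℝ)^2) := by
      intro s
      rw [Finset.mul_sum]
      calc ∑ i ∈ Finset.univ.erase s, p s * (p i * ((1 / (n : ℝ)) * (ℓ i s / (p i + p s))) ^ 2)
          ≤ ∑ i ∈ Finset.univ.erase s, 1 / (2 * (n:ℝ)^2) := by
            refine Finset.sum_le_sum fun i hi => ?_
            have his : i ≠ s := (Finset.mem_erase.mp hi).1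
            have hps := hp s; have hpi := hp i
            have hl0 := (hℓ i s his).1
            have hl1 := (hℓ i s his).2
            have heq : p s * (p i * ((1 / (n : ℝ)) * (ℓ i s / (p i + p s))) ^ 2)
                = (p s * p i * (ℓ i s)^2) / ((n:ℝ)^2 * (p i + p s)^2) := by
              field_simp
            have hl2 : ℓ i s ^ 2 ≤ 1 := by nlinarith
            have h2 : 2 * (p s * p i * ℓ i s ^ 2) ≤ (p i + p s)^2 := by
              nlinarith [sq_nonneg (p i - p s), mul_pos hps hpi]
            rw [heq, div_le_div_iff₀ (by positivity) (by positivity)]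
            nlinarith [mul_le_mul_of_nonneg_left h2 (sq_nonneg (n:ℝ))]
        _ = ((n:ℝ) - 1) / (2 * (n:ℝ)^2) := by
            rw [Finset.sum_const, Finset.card_erase_of_mem (Finset.mem_univ s),
              Finset.card_univ, Fintype.card_fin, nsmul_eq_mul]
            push_cast [Nat.cast_sub hn1]
            ring
    calc ∑ s, p s * ∑ i ∈ Finset.univ.erase s,
          p i * ((1 / (n : ℝ)) * (ℓ i s / (p i + p s))) ^ 2
        ≤ ∑ s : Fin n, ((n:ℝ) - 1) / (2 * (n:ℝ)^2) := Finset.sum_le_sum fun s _ => step s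
      _ = (n:ℝ) * (((n:ℝ) - 1) / (2 * (n:ℝ)^2)) := by
          rw [Finset.sum_const, Finset.card_univ, Fintype.card_fin, nsmul_eq_mul]
      _ = ((n:ℝ) - 1) / (2 * (n:ℝ)) := by field_simp
      _ ≤ 1 / 2 := by
          rw [div_le_div_iff₀ (by positivity) (by norm_num)]
          nlinarith
  linarith [hA, hB]
end
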